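/- arXiv:1709.10210 — 4 statements merged into one kernel-verified Lean document; each statement's English description precedes it below -/
import Mathlib

section
/- Let (λ_k) be a nonincreasing sequence of reals with λ_k ≥ 1 for all k, and suppose there are constants c ∈ (0,1) and a sequence (ε_k) with ε_k → 0 such that λ_{2k} ≤ c·e^{ε_k} + (1-c)·λ_k for all k. Then λ_k → 1. -/
open Filter

theorem stmt_3 (lam : ℕ → ℝ) (c : ℝ) (eps : ℕ → ℝ)
    (hmono : Antitone lam) (hlam : ∀ k, 1 ≤ lam k)
    (hc0 : 0 < c) (hc1 : c < 1)
    (heps0 : ∀ k, 0 ≤ eps k)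
    (heps : Tendsto eps atTop (nhds 0))
    (hrec : ∀ k, lam (2 * k) ≤ c * Real.exp (eps k) + (1 - c) * lam k) :
    Tendsto lam atTop (nhds 1) := by
  have hbdd : BddBelow (Set.range lam) := ⟨1, fun x ⟨k, hk⟩ => hk ▸ hlam k⟩
  have hL : Tendsto lam atTop (nhds (⨅ i, lam i)) :=
    tendsto_atTop_ciInf hmono hbdd
  set L := ⨅ i, lam i with hLdef
  have hL1 : 1 ≤ L := le_ciInf hlam
  -- subsequence 2k
  have h2k : Tendsto (fun k => lam (2 * k)) atTop (nhds L) :=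
    hL.comp (tendsto_atTop_atTop_of_monotone (fun a b h => by omega)
      (fun b => ⟨b, by omega⟩))
  have hrhs : Tendsto (fun k => c * Real.exp (eps k) + (1 - c) * lam k) atTop
      (nhds (c * Real.exp 0 + (1 - c) * L)) := by
    exact (((Real.continuous_exp.tendsto 0).comp heps).const_mul c).add (hL.const_mul _)
  have hle : L ≤ c * Real.exp 0 + (1 - c) * L :=
    le_of_tendsto_of_tendsto' h2k hrhs hrec
  rw [Real.exp_zero] at hle
  have : L = 1 := by nlinarith
  rwa [this] at hL
end

section
/- If lim_n (1/n)·‖ξ_n‖_∞ = 0, then any conformal measure μ for ψ is a weak Gibbs measure: with K_n = e^{‖ξ_n‖_∞} one has (1/K_n) ≤ μ([x_0…x_{n-1}])/e^{ψ^n(y)-nP} ≤ K_n for all cylinders and y in them, and (log K_n)/n → 0. -/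
open MeasureTheory Filter

/-- The shift map on the full shift `{1,…,m}^ℕ`. -/
def shift {m : ℕ} (x : ℕ → Fin m) : ℕ → Fin m := fun n => x (n + 1)

/-- Birkhoff sum `ψ^n(x) = ∑_{i<n} ψ(σ^i x)`. -/
noncomputable def birk {m : ℕ} (ψ : (ℕ → Fin m) → ℝ) (n : ℕ) (x : ℕ → Fin m) : ℝ :=
  ∑ i ∈ Finset.range n, ψ (shift^[i] x)

/-- The cylinder `[x_0 … x_{n-1}]`. -/
def cyl {m : ℕ} (x : ℕ → Fin m) (n : ℕ) : Set (ℕ → Fin m) := {y | ∀ i < n, y i = x i}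

/-- `ξ_n(x) = sup_{y ∈ [x_0…x_{n-1}]} ∑_{j<n} |ψ(σ^j x) - ψ(σ^j y)|`. -/
noncomputable def xiseq {m : ℕ} (ψ : (ℕ → Fin m) → ℝ) (n : ℕ) (x : ℕ → Fin m) : ℝ :=
  sSup {r : ℝ | ∃ y ∈ cyl x n,
    r = ∑ j ∈ Finset.range n, |ψ (shift^[j] x) - ψ (shift^[j] y)|}

/-- `‖ξ_n‖_∞`, the sup norm of `ξ_n`. -/
noncomputable def xinorm {m : ℕ} (ψ : (ℕ → Fin m) → ℝ) (n : ℕ) : ℝ :=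
  ⨆ x : ℕ → Fin m, xiseq ψ n x

/-- Prepending a symbol to an infinite word. -/
def cons {m : ℕ} (a : Fin m) (x : ℕ → Fin m) : ℕ → Fin m :=
  fun n => match n with
  | 0 => a
  | Nat.succ k => x k

section Aux

variable {m : ℕ}

lemma continuous_shift : Continuous (shift (m := m)) :=
  continuous_pi fun i => continuous_apply (i + 1)

lemma continuous_cons (a : Fin m) : Continuous (cons a) := by
  apply continuous_pi
  intro i
  cases i with
  | zero => exact continuous_const
  | succ k => exact continuous_apply k

/-- Prepending a finite word. -/
def consn {n : ℕ} (w : Fin n → Fin m) (z : ℕ → Fin m) : ℕ → Fin m :=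
  fun k => if h : k < n then w ⟨k, h⟩ else z (k - n)

lemma consn_zero (w : Fin 0 → Fin m) (z : ℕ → Fin m) : consn w z = z := by
  funext k; simp [consn]

lemma continuous_consn {n : ℕ} (w : Fin n → Fin m) : Continuous (consn w) := by
  apply continuous_pi
  intro k
  by_cases h : k < n
  · simp only [consn, dif_pos h]; exact continuous_const
  · simp only [consn, dif_neg h]; exact continuous_apply _

lemma cons_consn {n : ℕ} (a : Fin m) (w : Fin n → Fin m) (z : ℕ → Fin m) :
    cons a (consn w z) = consn (Fin.cons a w) z := by
  funext k
  cases k with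
  | zero =>
    simp only [cons, consn, dif_pos (Nat.succ_pos n)]
    rfl
  | succ k =>
    simp only [cons, consn]
    by_cases h : k < n
    · rw [dif_pos h, dif_pos (Nat.succ_lt_succ h)]
      exact (Fin.cons_succ (α := fun _ : Fin (n+1) => Fin m) a w ⟨k, h⟩).symm
    · rw [dif_neg h, dif_neg (by omega)]
      congr 1
      omega

lemma shift_cons (a : Fin m) (z : ℕ → Fin m) : shift (cons a z) = z := rfl

lemma birk_cons (ψ : (ℕ → Fin m) → ℝ) (n : ℕ) (a : Fin m) (z : ℕ → Fin m) :
    birk ψ (n + 1) (cons a z) = ψ (cons a z) + birk ψ n z := by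
  unfold birk
  rw [Finset.sum_range_succ']
  simp only [Function.iterate_succ_apply, shift_cons, Function.iterate_zero_apply]
  ring

/-- The transfer operator. -/
noncomputable def Lop (ψ : (ℕ → Fin m) → ℝ) (φ : (ℕ → Fin m) → ℝ) : (ℕ → Fin m) → ℝ :=
  fun z => ∑ a : Fin m, Real.exp (ψ (cons a z)) * φ (cons a z)

lemma Lop_continuous {ψ φ : (ℕ → Fin m) → ℝ} (hψ : Continuous ψ) (hφ : Continuous φ) :
    Continuous (Lop ψ φ) := by
  apply continuous_finset_sum
  intro a _
  exact (Real.continuous_exp.comp (hψ.comp (continuous_cons a))).mul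
    (hφ.comp (continuous_cons a))

lemma Lop_iterate_continuous {ψ φ : (ℕ → Fin m) → ℝ} (hψ : Continuous ψ) (hφ : Continuous φ)
    (n : ℕ) : Continuous ((Lop ψ)^[n] φ) := by
  induction n with
  | zero => exact hφ
  | succ n ih => rw [Function.iterate_succ_apply']; exact Lop_continuous hψ ih

lemma Lop_iterate_eq (ψ : (ℕ → Fin m) → ℝ) (n : ℕ) (φ : (ℕ → Fin m) → ℝ) (z : ℕ → Fin m) :
    (Lop ψ)^[n] φ z = ∑ w : Fin n → Fin m, Real.exp (birk ψ n (consn w z)) * φ (consn w z) := by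
  induction n generalizing φ with
  | zero =>
    simp [birk, consn_zero]
  | succ n ih =>
    rw [Function.iterate_succ_apply, ih]
    simp only [Lop, Finset.mul_sum]
    rw [← Equiv.sum_comp (Fin.consEquiv (fun _ : Fin (n + 1) => Fin m))
      (fun v => Real.exp (birk ψ (n + 1) (consn v z)) * φ (consn v z)),
      Fintype.sum_prod_type, Finset.sum_comm]
    apply Finset.sum_congr rfl
    intro w _
    apply Finset.sum_congr rfl
    intro a _
    rw [show (Fin.consEquiv fun _ : Fin (n + 1) => Fin m) (w, a) = Fin.cons w a from rfl]
    rw [← cons_consn, birk_cons, Real.exp_add]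
    ring

lemma integral_Lop_iterate (ψ : (ℕ → Fin m) → ℝ) (hψ : Continuous ψ)
    (μ : Measure (ℕ → Fin m)) (P : ℝ)
    (hconf : ∀ φ : (ℕ → Fin m) → ℝ, Continuous φ →
      ∫ x, (∑ a : Fin m, Real.exp (ψ (cons a x)) * φ (cons a x)) ∂μ =
        Real.exp P * ∫ x, φ x ∂μ)
    (n : ℕ) (φ : (ℕ → Fin m) → ℝ) (hφ : Continuous φ) :
    ∫ z, (Lop ψ)^[n] φ z ∂μ = Real.exp ((n : ℝ) * P) * ∫ z, φ z ∂μ := by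
  induction n with
  | zero => simp
  | succ n ih =>
    have h0 : ∀ z, (Lop ψ)^[n + 1] φ z = Lop ψ ((Lop ψ)^[n] φ) z := by
      intro z; rw [Function.iterate_succ_apply']
    simp only [h0]
    have h1 := hconf ((Lop ψ)^[n] φ) (Lop_iterate_continuous hψ hφ n)
    rw [show (∫ z, Lop ψ ((Lop ψ)^[n] φ) z ∂μ) =
        (∫ x, (∑ a : Fin m, Real.exp (ψ (cons a x)) * ((Lop ψ)^[n] φ) (cons a x)) ∂μ) from rfl,
      h1, ih, ← mul_assoc, ← Real.exp_add]
    congr 2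
    push_cast
    ring

end Aux

theorem stmt_12 {m : ℕ} (hm : 0 < m) (ψ : (ℕ → Fin m) → ℝ) (hψ : Continuous ψ)
    (μ : Measure (ℕ → Fin m)) [IsProbabilityMeasure μ] (P : ℝ)
    (hconf : ∀ φ : (ℕ → Fin m) → ℝ, Continuous φ →
      ∫ x, (∑ a : Fin m, Real.exp (ψ (cons a x)) * φ (cons a x)) ∂μ =
        Real.exp P * ∫ x, φ x ∂μ)
    (hxi : Tendsto (fun n => xinorm ψ n / (n : ℝ)) atTop (nhds 0)) :
    (∀ (n : ℕ) (x y : ℕ → Fin m), y ∈ cyl x n →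
      (Real.exp (xinorm ψ n))⁻¹ ≤
          (μ (cyl x n)).toReal / Real.exp (birk ψ n y - (n : ℝ) * P) ∧
      (μ (cyl x n)).toReal / Real.exp (birk ψ n y - (n : ℝ) * P) ≤
          Real.exp (xinorm ψ n)) ∧
    Tendsto (fun n => Real.log (Real.exp (xinorm ψ n)) / (n : ℝ)) atTop (nhds 0) := by
  -- a uniform bound on |ψ|
  have hne : Nonempty (ℕ → Fin m) := ⟨fun _ => ⟨0, hm⟩⟩
  obtain ⟨x₀, -, hC⟩ := isCompact_univ.exists_isMaxOn
    (Set.univ_nonempty (α := ℕ → Fin m)) ((continuous_abs.comp hψ).continuousOn)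
  set C : ℝ := |ψ x₀| with hCdef
  have hCb : ∀ u : ℕ → Fin m, |ψ u| ≤ C := fun u => hC (Set.mem_univ u)
  constructor
  · intro n x y hy
    set ξ : ℝ := xinorm ψ n with hξdef
    -- the distinguished word
    set w₀ : Fin n → Fin m := fun i => x i with hw₀
    -- the indicator of the cylinder as a continuous function
    set φ : (ℕ → Fin m) → ℝ :=
      fun z => ∏ i ∈ Finset.range n, (if z i = x i then (1 : ℝ) else 0) with hφdef
    have hφcont : Continuous φ := by
      apply continuous_finset_prod
      intro i _
      exact (continuous_of_discreteTopology
        (f := fun b : Fin m => if b = x i then (1 : ℝ) else 0)).comp (continuous_apply i)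
    have hcylm : MeasurableSet (cyl x n) := by
      have : cyl x n = ⋂ i ∈ Finset.range n, (fun z : ℕ → Fin m => z i) ⁻¹' {x i} := by
        ext z; simp [cyl]
      rw [this]
      exact Finset.measurableSet_biInter _
        (fun i _ => (measurable_pi_apply i) (measurableSet_singleton (x i)))
    have hφeq : φ = Set.indicator (cyl x n) (fun _ => (1 : ℝ)) := by
      funext z
      by_cases hz : z ∈ cyl x n
      · rw [Set.indicator_of_mem hz]
        exact Finset.prod_eq_one fun i hi => if_pos (hz i (Finset.mem_range.mp hi))
      · rw [Set.indicator_of_notMem hz]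
        have : ∃ i, i < n ∧ z i ≠ x i := by
          by_contra h
          push_neg at h
          exact hz fun i hi => h i hi
        obtain ⟨i, hi, hne'⟩ := this
        exact Finset.prod_eq_zero (Finset.mem_range.mpr hi) (if_neg hne')
    have hintφ : ∫ z, φ z ∂μ = (μ (cyl x n)).toReal := by
      rw [hφeq, integral_indicator_const _ hcylm]
      simp [Measure.real]
    -- the key integral identity
    have hφw : ∀ (w : Fin n → Fin m) (z : ℕ → Fin m),
        φ (consn w z) = if w = w₀ then 1 else 0 := by
      intro w z
      by_cases hw : w = w₀
      · rw [if_pos hw]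
        apply Finset.prod_eq_one
        intro i hi
        have hi' : i < n := Finset.mem_range.mp hi
        rw [if_pos]
        show consn w z i = x i
        rw [show consn w z i = w ⟨i, hi'⟩ from dif_pos hi', hw]
      · rw [if_neg hw]
        have : ∃ i : Fin n, w i ≠ w₀ i := by
          by_contra h
          push_neg at h
          exact hw (funext h)
        obtain ⟨i, hi⟩ := this
        apply Finset.prod_eq_zero (Finset.mem_range.mpr i.isLt)
        rw [if_neg]
        show consn w z i ≠ x i
        rw [show consn w z i = w ⟨(i : ℕ), i.isLt⟩ from dif_pos i.isLt, Fin.eta]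
        exact hi
    have hred : ∀ z : ℕ → Fin m,
        (Lop ψ)^[n] φ z = Real.exp (birk ψ n (consn w₀ z)) := by
      intro z
      rw [Lop_iterate_eq]
      have : ∀ w : Fin n → Fin m,
          Real.exp (birk ψ n (consn w z)) * φ (consn w z) =
            if w = w₀ then Real.exp (birk ψ n (consn w z)) else 0 := by
        intro w
        rw [hφw]
        split <;> simp
      simp only [this]
      rw [Finset.sum_ite_eq' Finset.univ w₀ (fun w => Real.exp (birk ψ n (consn w z)))]
      simp
    have key : ∫ z, Real.exp (birk ψ n (consn w₀ z)) ∂μ =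
        Real.exp ((n : ℝ) * P) * (μ (cyl x n)).toReal := by
      have h1 := integral_Lop_iterate ψ hψ μ P hconf n φ hφcont
      rw [hintφ] at h1
      rw [← h1]
      exact integral_congr_ae (Filter.Eventually.of_forall fun z => (hred z).symm)
    set I : ℝ := ∫ z, Real.exp (birk ψ n (consn w₀ z)) ∂μ with hIdef
    -- pointwise comparison with birk ψ n y
    have hbd : ∀ z : ℕ → Fin m, |birk ψ n (consn w₀ z) - birk ψ n y| ≤ ξ := by
      intro z
      set u : ℕ → Fin m := consn w₀ z with hu
      have hucyl : u ∈ cyl y n := by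
        intro i hi
        show consn w₀ z i = y i
        rw [show consn w₀ z i = w₀ ⟨i, hi⟩ from dif_pos hi]
        exact (hy i hi).symm
      have h1 : |birk ψ n u - birk ψ n y| ≤
          ∑ j ∈ Finset.range n, |ψ (shift^[j] y) - ψ (shift^[j] u)| := by
        unfold birk
        rw [← Finset.sum_sub_distrib]
        refine (Finset.abs_sum_le_sum_abs _ _).trans ?_
        refine Finset.sum_le_sum fun j _ => ?_
        rw [abs_sub_comm]
      have hSbdd : BddAbove {r : ℝ | ∃ y' ∈ cyl y n,
          r = ∑ j ∈ Finset.range n, |ψ (shift^[j] y) - ψ (shift^[j] y')|} := by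
        refine ⟨n * (2 * C), ?_⟩
        rintro r ⟨y', -, rfl⟩
        calc ∑ j ∈ Finset.range n, |ψ (shift^[j] y) - ψ (shift^[j] y')|
            ≤ ∑ j ∈ Finset.range n, (2 * C) := by
              refine Finset.sum_le_sum fun j _ => ?_
              calc |ψ (shift^[j] y) - ψ (shift^[j] y')|
                  ≤ |ψ (shift^[j] y)| + |ψ (shift^[j] y')| := abs_sub _ _
                _ ≤ C + C := add_le_add (hCb _) (hCb _)
                _ = 2 * C := by ring
          _ = n * (2 * C) := by rw [Finset.sum_const, Finset.card_range]; simp [nsmul_eq_mul]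
      have h2 : ∑ j ∈ Finset.range n, |ψ (shift^[j] y) - ψ (shift^[j] u)| ≤ xiseq ψ n y :=
        le_csSup hSbdd ⟨u, hucyl, rfl⟩
      have hbddrange : BddAbove (Set.range (xiseq ψ n)) := by
        refine ⟨n * (2 * C), ?_⟩
        rintro r ⟨v, rfl⟩
        apply csSup_le
        · exact ⟨0, v, fun i _ => rfl, by simp⟩
        · rintro r ⟨v', -, rfl⟩
          calc ∑ j ∈ Finset.range n, |ψ (shift^[j] v) - ψ (shift^[j] v')|
              ≤ ∑ j ∈ Finset.range n, (2 * C) := by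
                refine Finset.sum_le_sum fun j _ => ?_
                calc |ψ (shift^[j] v) - ψ (shift^[j] v')|
                    ≤ |ψ (shift^[j] v)| + |ψ (shift^[j] v')| := abs_sub _ _
                  _ ≤ C + C := add_le_add (hCb _) (hCb _)
                  _ = 2 * C := by ring
            _ = n * (2 * C) := by rw [Finset.sum_const, Finset.card_range]; simp [nsmul_eq_mul]
      have h3 : xiseq ψ n y ≤ ξ := le_ciSup hbddrange y
      exact h1.trans (h2.trans h3)
    -- integrability
    have hgcont : Continuous fun z : ℕ → Fin m => Real.exp (birk ψ n (consn w₀ z)) := by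
      have hb : Continuous (birk ψ n) :=
        continuous_finset_sum _ fun i _ => hψ.comp (continuous_shift.iterate i)
      exact Real.continuous_exp.comp (hb.comp (continuous_consn w₀))
    have hgint : Integrable (fun z : ℕ → Fin m => Real.exp (birk ψ n (consn w₀ z))) μ :=
      hgcont.integrable_of_hasCompactSupport (HasCompactSupport.of_compactSpace _)
    have hle1 : Real.exp (birk ψ n y - ξ) ≤ I := by
      calc Real.exp (birk ψ n y - ξ)
          = ∫ _z : ℕ → Fin m, Real.exp (birk ψ n y - ξ) ∂μ := by simp
        _ ≤ I := by
            refine integral_mono (integrable_const _) hgint fun z => ?_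
            exact Real.exp_le_exp.mpr (by have := (abs_le.mp (hbd z)).1; linarith)
    have hle2 : I ≤ Real.exp (birk ψ n y + ξ) := by
      calc I ≤ ∫ _z : ℕ → Fin m, Real.exp (birk ψ n y + ξ) ∂μ := by
            refine integral_mono hgint (integrable_const _) fun z => ?_
            exact Real.exp_le_exp.mpr (by have := (abs_le.mp (hbd z)).2; linarith)
        _ = Real.exp (birk ψ n y + ξ) := by simp
    -- the ratio
    have hT : (μ (cyl x n)).toReal = I / Real.exp ((n : ℝ) * P) := by
      rw [key, mul_comm, mul_div_assoc, div_self (Real.exp_ne_zero _), mul_one]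
    have hR : (μ (cyl x n)).toReal / Real.exp (birk ψ n y - (n : ℝ) * P) =
        I / Real.exp (birk ψ n y) := by
      rw [hT, div_div, ← Real.exp_add]
      congr 2
      ring
    rw [hR]
    constructor
    · rw [← Real.exp_neg, le_div_iff₀ (Real.exp_pos _), ← Real.exp_add]
      calc Real.exp (-ξ + birk ψ n y) = Real.exp (birk ψ n y - ξ) := by ring_nf
        _ ≤ I := hle1
    · rw [div_le_iff₀ (Real.exp_pos _), ← Real.exp_add]
      calc I ≤ Real.exp (birk ψ n y + ξ) := hle2
        _ = Real.exp (xinorm ψ n + birk ψ n y) := by rw [hξdef]; ring_nf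
  · simpa only [Real.log_exp] using hxi
end

section
/- Let A = (a_l), B = (b_l) be finite families of positive reals, P₁, P₂ probability vectors over the same index set, c ∈ (0,1), and M ≥ 1 such that: a_l ≤ M·b_l for all l, and P₂ - c·P₁ has nonnegative entries. Then (P₁·A)/(P₂·B) ≤ c·M + (1-c)·(max_l a_l)/(min_l b_l). -/
theorem stmt_16 {ι : Type*} [Fintype ι] [Nonempty ι]
    (a b p₁ p₂ : ι → ℝ) (c M : ℝ)
    (ha : ∀ l, 0 < a l) (hb : ∀ l, 0 < b l)
    (hp₁ : ∀ l, 0 ≤ p₁ l) (hp₁sum : ∑ l, p₁ l = 1)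
    (hp₂ : ∀ l, 0 ≤ p₂ l) (hp₂sum : ∑ l, p₂ l = 1)
    (hc0 : 0 < c) (hc1 : c < 1) (hM : 1 ≤ M)
    (hab : ∀ l, a l ≤ M * b l)
    (hdom : ∀ l, 0 ≤ p₂ l - c * p₁ l) :
    (∑ l, p₁ l * a l) / (∑ l, p₂ l * b l) ≤
      c * M + (1 - c) * (Finset.univ.sup' Finset.univ_nonempty a /
        Finset.univ.inf' Finset.univ_nonempty b) := by
  set m := Finset.univ.inf' Finset.univ_nonempty b with hm
  set Amax := Finset.univ.sup' Finset.univ_nonempty a with hA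
  have hm0 : 0 < m := by
    obtain ⟨l, _, hl⟩ := Finset.exists_mem_eq_inf' Finset.univ_nonempty b
    rw [hm, hl]; exact hb l
  have hmle : ∀ l, m ≤ b l := fun l => Finset.inf'_le _ (Finset.mem_univ l)
  have hAge : ∀ l, a l ≤ Amax := fun l => Finset.le_sup' _ (Finset.mem_univ l)
  have hA0 : 0 < Amax := lt_of_lt_of_le (ha (Classical.arbitrary ι)) (hAge _)
  set R := Amax / m with hR
  have hR0 : 0 < R := div_pos hA0 hm0
  have hRm : R * m = Amax := by rw [hR]; exact div_mul_cancel₀ _ hm0.ne'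
  set M' := min M R with hM'
  have habM' : ∀ l, a l ≤ M' * b l := by
    intro l
    rcases le_total M R with h | h
    · rw [hM', min_eq_left h]; exact hab l
    · rw [hM', min_eq_right h]
      calc a l ≤ Amax := hAge l
        _ = R * m := hRm.symm
        _ ≤ R * b l := by nlinarith [hmle l]
  have hM'0 : 0 < M' := lt_min (lt_of_lt_of_le one_pos hM) hR0
  have hx : m ≤ ∑ l, p₁ l * b l := by
    calc m = ∑ l, p₁ l * m := by rw [← Finset.sum_mul, hp₁sum, one_mul]
      _ ≤ ∑ l, p₁ l * b l :=
        Finset.sum_le_sum fun l _ => mul_le_mul_of_nonneg_left (hmle l) (hp₁ l)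
  have hnum1 : ∑ l, p₁ l * a l ≤ Amax := by
    calc ∑ l, p₁ l * a l ≤ ∑ l, p₁ l * Amax :=
        Finset.sum_le_sum fun l _ => mul_le_mul_of_nonneg_left (hAge l) (hp₁ l)
      _ = Amax := by rw [← Finset.sum_mul, hp₁sum, one_mul]
  have hnum2 : ∑ l, p₁ l * a l ≤ M' * ∑ l, p₁ l * b l := by
    rw [Finset.mul_sum]
    exact Finset.sum_le_sum fun l _ => by nlinarith [habM' l, hp₁ l]
  have hden : c * (∑ l, p₁ l * b l) + (1 - c) * m ≤ ∑ l, p₂ l * b l := by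
    have hs : ∑ l, (p₂ l - c * p₁ l) = 1 - c := by
      rw [Finset.sum_sub_distrib, ← Finset.mul_sum, hp₁sum, hp₂sum, mul_one]
    have h1 : (1 - c) * m ≤ ∑ l, (p₂ l - c * p₁ l) * b l := by
      calc (1 - c) * m = ∑ l, (p₂ l - c * p₁ l) * m := by rw [← Finset.sum_mul, hs]
        _ ≤ ∑ l, (p₂ l - c * p₁ l) * b l :=
          Finset.sum_le_sum fun l _ => mul_le_mul_of_nonneg_left (hmle l) (hdom l)
    have h2 : ∑ l, p₂ l * b l
        = c * (∑ l, p₁ l * b l) + ∑ l, (p₂ l - c * p₁ l) * b l := by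
      rw [Finset.mul_sum, ← Finset.sum_add_distrib]
      exact Finset.sum_congr rfl fun l _ => by ring
    linarith
  have hx0 : 0 ≤ ∑ l, p₁ l * b l :=
    Finset.sum_nonneg fun l _ => mul_nonneg (hp₁ l) (hb l).le
  have hden0 : 0 < ∑ l, p₂ l * b l := by nlinarith
  rw [div_le_iff₀ hden0]
  have hRM : M' ≤ R := min_le_right _ _
  have hMM : M' ≤ M := min_le_left _ _
  have hc1' : (0:ℝ) ≤ 1 - c := by linarith
  have key : ∑ l, p₁ l * a l ≤ (c * M' + (1 - c) * R) * ∑ l, p₂ l * b l := by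
    have h1 := mul_le_mul_of_nonneg_left hnum2 hc0.le
    have h2 := mul_le_mul_of_nonneg_left hnum1 hc1'
    have e1 : ∑ l, p₁ l * a l ≤ c * (M' * ∑ l, p₁ l * b l) + (1 - c) * (R * m) := by
      rw [hRm]; linarith
    have h4 : c * (M' * ∑ l, p₁ l * b l) + (1 - c) * (R * m)
        ≤ (c * M' + (1 - c) * R) * (c * (∑ l, p₁ l * b l) + (1 - c) * m) := by
      nlinarith [mul_nonneg (mul_nonneg hc0.le hc1')
        (mul_nonneg (sub_nonneg.2 hRM) (sub_nonneg.2 hx))]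
    have h5 : (0:ℝ) ≤ c * M' + (1 - c) * R := by positivity
    have h3 := mul_le_mul_of_nonneg_left hden h5
    linarith
  nlinarith [key, mul_nonneg (mul_nonneg hc0.le (sub_nonneg.2 hMM)) hden0.le]
end

section
/- Let (λ_n) be a nonincreasing sequence with λ_n ≥ 1, c ∈ (0,1), α = 1-c, b > 0, and f : ℕ → ℝ a decreasing positive function with f(k)·k bounded. Suppose for all sufficiently large k and all l ≥ 2: λ_{lk} ≤ e^{2·b·f(k)·k·l} + α^{l-1}·λ_k. Then for every γ ∈ (0,1) there exist constants C > 0, α' ∈ (0,1), and N such that for all n > N: log λ_n ≤ C·max(α'^{n^{1-γ}}, f(⌊n^γ⌋)·n). -/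
open Filter

theorem stmt_17 (lam : ℕ → ℝ) (c b : ℝ) (f : ℕ → ℝ)
    (hlam_mono : Antitone lam) (hlam_ge : ∀ n, 1 ≤ lam n)
    (hc0 : 0 < c) (hc1 : c < 1) (hb : 0 < b)
    (hf_anti : Antitone f) (hf_pos : ∀ k, 0 < f k)
    (hf_bdd : ∃ B : ℝ, ∀ k : ℕ, f k * k ≤ B)
    (hrec : ∃ K₀ : ℕ, ∀ k ≥ K₀, ∀ l ≥ 2,
      lam (l * k) ≤ Real.exp (2 * b * f k * k * l) + (1 - c) ^ (l - 1) * lam k) :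
    ∀ γ : ℝ, 0 < γ → γ < 1 →
      ∃ C : ℝ, 0 < C ∧ ∃ α' : ℝ, 0 < α' ∧ α' < 1 ∧ ∃ N : ℕ, ∀ n > N,
        Real.log (lam n) ≤
          C * max (α' ^ ((n : ℝ) ^ (1 - γ))) (f ⌊(n : ℝ) ^ γ⌋₊ * n) := by
  obtain ⟨K₀, hrec⟩ := hrec
  intro γ hγ0 hγ1
  set α : ℝ := 1 - c with hα
  have hα0 : (0:ℝ) < α := by simp only [hα]; linarith
  have hα1 : α < 1 := by simp only [hα]; linarith
  have hlamK : (0:ℝ) < lam K₀ := lt_of_lt_of_le one_pos (hlam_ge _)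
  refine ⟨2 * b + lam K₀ / α ^ 2, by positivity, α, hα0, hα1, ?_⟩
  have h1 : Tendsto (fun n : ℕ => ⌊(n : ℝ) ^ γ⌋₊) atTop atTop :=
    tendsto_nat_floor_atTop.comp ((tendsto_rpow_atTop hγ0).comp tendsto_natCast_atTop_atTop)
  have h2 : Tendsto (fun n : ℕ => ⌊(n : ℝ) ^ (1 - γ)⌋₊) atTop atTop :=
    tendsto_nat_floor_atTop.comp
      ((tendsto_rpow_atTop (by linarith)).comp tendsto_natCast_atTop_atTop)
  have hev : ∀ᶠ n : ℕ in atTop,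
      max K₀ 1 ≤ ⌊(n:ℝ)^γ⌋₊ ∧ 2 ≤ ⌊(n:ℝ)^(1-γ)⌋₊ ∧ 1 ≤ n :=
    (h1.eventually_ge_atTop _).and ((h2.eventually_ge_atTop _).and (eventually_ge_atTop 1))
  obtain ⟨N, hN⟩ := eventually_atTop.mp hev
  refine ⟨N, fun n hn => ?_⟩
  obtain ⟨hk', hl, hn1⟩ := hN n hn.le
  set k := ⌊(n:ℝ)^γ⌋₊ with hkdef
  set l := ⌊(n:ℝ)^(1-γ)⌋₊ with hldef
  have hkK : K₀ ≤ k := le_trans (le_max_left _ _) hk'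
  have hk1 : 1 ≤ k := le_trans (le_max_right _ _) hk'
  have hn0 : (0:ℝ) < n := by exact_mod_cast hn1
  have hkr : (k:ℝ) ≤ (n:ℝ)^γ := Nat.floor_le (by positivity)
  have hlr : (l:ℝ) ≤ (n:ℝ)^(1-γ) := Nat.floor_le (by positivity)
  have hk0 : (0:ℝ) < k := by exact_mod_cast hk1
  have hl0 : (0:ℝ) < l := by
    have : (2:ℝ) ≤ l := by exact_mod_cast hl
    linarith
  have hkl : l * k ≤ n := by
    have h : ((l*k : ℕ):ℝ) ≤ (n:ℝ) := by
      push_cast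
      calc (l:ℝ)*(k:ℝ) ≤ (n:ℝ)^(1-γ) * (n:ℝ)^γ :=
            mul_le_mul hlr hkr hk0.le (by positivity)
        _ = (n:ℝ) := by rw [← Real.rpow_add hn0]; norm_num
    exact_mod_cast h
  set t : ℝ := 2 * b * f k * k * l with ht
  have ht0 : 0 < t :=
    mul_pos (mul_pos (mul_pos (by linarith) (hf_pos k)) hk0) hl0
  set A := Real.exp t with hA
  set B := α ^ (l-1) * lam K₀ with hB
  have hB0 : 0 < B := mul_pos (pow_pos hα0 _) hlamK
  have hlamB : lam n ≤ A + B := by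
    refine le_trans (hlam_mono hkl) (le_trans (hrec k hkK l hl) ?_)
    have : lam k ≤ lam K₀ := hlam_mono hkK
    have hp : (0:ℝ) ≤ α ^ (l-1) := (pow_pos hα0 _).le
    nlinarith [mul_le_mul_of_nonneg_left this hp]
  have hA1 : (1:ℝ) ≤ A := Real.one_le_exp ht0.le
  have hA0 : (0:ℝ) < A := lt_of_lt_of_le one_pos hA1
  have hlog : Real.log (lam n) ≤ t + B := by
    have hh1 : Real.log (lam n) ≤ Real.log (A + B) := by
      have : (0:ℝ) < lam n := lt_of_lt_of_le one_pos (hlam_ge n)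
      gcongr
    have h3 : Real.log ((A+B)/A) ≤ (A+B)/A - 1 :=
      Real.log_le_sub_one_of_pos (by positivity)
    have h4 : Real.log ((A+B)/A) = Real.log (A+B) - Real.log A :=
      Real.log_div (by positivity) (by positivity)
    have h5 : (A+B)/A - 1 = B/A := by field_simp; ring
    have h6 : B/A ≤ B := div_le_self hB0.le hA1
    have h7 : Real.log A = t := Real.log_exp t
    rw [h4, h5] at h3
    linarith
  have htb : t ≤ 2 * b * (f k * n) := by
    have hkln : (k:ℝ) * l ≤ n := by
      have : ((l*k : ℕ):ℝ) ≤ (n:ℝ) := by exact_mod_cast hkl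
      push_cast at this
      linarith
    have hco : (0:ℝ) ≤ 2 * b * f k := by
      have := hf_pos k; positivity
    calc t = 2*b*f k*((k:ℝ)*l) := by rw [ht]; ring
      _ ≤ 2*b*f k*n := mul_le_mul_of_nonneg_left hkln hco
      _ = 2*b*(f k*n) := by ring
  have hBb : B ≤ lam K₀ / α^2 * α ^ ((n:ℝ)^(1-γ)) := by
    have hl1n : 1 ≤ l := le_trans one_le_two hl
    have hlc : ((l-1:ℕ):ℝ) = (l:ℝ) - 1 := by
      push_cast [hl1n]; ring
    have hlt : (n:ℝ)^(1-γ) < l + 1 := Nat.lt_floor_add_one _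
    have hexp : (n:ℝ)^(1-γ) - 2 ≤ ((l-1:ℕ):ℝ) := by rw [hlc]; linarith
    have h7 : (α : ℝ) ^ (l-1) = α ^ (((l-1:ℕ)):ℝ) := (Real.rpow_natCast α (l-1)).symm
    have h8 : α ^ (((l-1:ℕ)):ℝ) ≤ α ^ ((n:ℝ)^(1-γ) - 2) :=
      Real.rpow_le_rpow_of_exponent_ge hα0 hα1.le hexp
    have h9 : α ^ ((n:ℝ)^(1-γ) - 2) = α ^ ((n:ℝ)^(1-γ)) / α^2 := by
      rw [Real.rpow_sub hα0, show (2:ℝ) = ((2:ℕ):ℝ) by norm_num, Real.rpow_natCast]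
    have h10 : (α : ℝ) ^ (l-1) ≤ α ^ ((n:ℝ)^(1-γ)) / α^2 := by
      rw [h7, ← h9]; exact h8
    calc B = α ^ (l-1) * lam K₀ := rfl
      _ ≤ (α ^ ((n:ℝ)^(1-γ)) / α^2) * lam K₀ :=
          mul_le_mul_of_nonneg_right h10 hlamK.le
      _ = lam K₀ / α^2 * α ^ ((n:ℝ)^(1-γ)) := by ring
  have hM1 : α ^ ((n:ℝ)^(1-γ)) ≤ max (α ^ ((n:ℝ)^(1-γ))) (f k * n) := le_max_left _ _
  have hM2 : f k * n ≤ max (α ^ ((n:ℝ)^(1-γ))) (f k * n) := le_max_right _ _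
  calc Real.log (lam n) ≤ t + B := hlog
    _ ≤ 2*b*(f k * n) + lam K₀/α^2 * α^((n:ℝ)^(1-γ)) := add_le_add htb hBb
    _ ≤ 2*b*(max (α ^ ((n:ℝ)^(1-γ))) (f k * n)) + lam K₀/α^2 * (max (α ^ ((n:ℝ)^(1-γ))) (f k * n)) := by
        have c1 : (0:ℝ) ≤ 2*b := by linarith
        have c2 : (0:ℝ) ≤ lam K₀/α^2 := by positivity
        exact add_le_add (mul_le_mul_of_nonneg_left hM2 c1) (mul_le_mul_of_nonneg_left hM1 c2)
    _ = (2 * b + lam K₀ / α ^ 2) * max (α ^ ((n:ℝ)^(1-γ))) (f k * n) := by ring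
end
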